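/- arXiv:1708.07468 — 3 statements merged into one kernel-verified Lean document; each statement's English description precedes it below -/
import Mathlib

section
/- Let f(u) = (u^2-1)^2 and θ(z) = tanh(√2 z). For any continuous bounded Θ : ℝ → ℝ with ∫_{-∞}^{∞} Θ(z) θ'(z) dz = 0 and |Θ(z)| ≤ Ce^{-ν|z|}, the function u₁(z) = θ'(z) ∫_0^z (θ'(ς))^{-2} ∫_ς^{∞} Θ(τ) θ'(τ) dτ dς is well-defined, bounded on ℝ, and solves -u₁'' + f''(θ) u₁ = Θ. -/
/-!
`θ' = √2 (1 - tanh² (√2 z))` solves the homogeneous equation `-v'' + f''(θ) v = 0`, and `u₁` is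
built from it by reduction of order: for any positive `ψ` with `ψ'' = V ψ`, the function
`ψ z ∫₀ᶻ ψ⁻² g` with `g ς = ∫_ς^∞ Θ ψ` satisfies `-u'' + V u = Θ`.

For the bound, write `t = tanh (√2 z)`. Since `|Θ| ≤ C`, orthogonality lets one estimate the tail
`g` from either end, `|g| ≤ C (1 - |t|)`, so the outer integrand is dominated by
`(C / √2) (1 + t²) / θ'`, the derivative of `(C / 2) t / θ'`. Hence `|u₁| ≤ (C / 2) |t| ≤ C / 2`.
-/

open Real MeasureTheory Set Filter Topology

theorem Real.hasDerivAt_tanh (x : ℝ) : HasDerivAt tanh (1 - tanh x ^ 2) x := by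
  have h := (hasDerivAt_sinh x).div (hasDerivAt_cosh x) (cosh_pos x).ne'
  refine (h.congr_deriv ?_).congr_of_eventuallyEq (.of_forall tanh_eq_sinh_div_cosh)
  rw [tanh_eq_sinh_div_cosh]
  field_simp

theorem Real.tanh_eq_one_sub (x : ℝ) : tanh x = 1 - 2 / (exp (2 * x) + 1) := by
  rw [tanh_eq_sinh_div_cosh, sinh_eq, cosh_eq, exp_neg, two_mul, exp_add]
  field_simp
  ring

theorem Real.tendsto_tanh_atTop : Tendsto tanh atTop (𝓝 1) := by
  have h : Tendsto (fun x : ℝ => exp (2 * x) + 1) atTop atTop :=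
    tendsto_atTop_add_const_right _ 1 (tendsto_exp_atTop.comp (tendsto_id.const_mul_atTop two_pos))
  have := (tendsto_const_nhds (x := (1 : ℝ))).sub ((tendsto_const_nhds (x := (2 : ℝ))).div_atTop h)
  rw [sub_zero] at this
  exact this.congr fun x => (tanh_eq_one_sub x).symm

theorem Real.tendsto_tanh_atBot : Tendsto tanh atBot (𝓝 (-1)) := by
  have := tendsto_tanh_atTop.neg.comp tendsto_neg_atBot_atTop
  simpa [Function.comp_def, tanh_neg] using this

theorem hasDerivAt_integral_Ici {E : Type*} [NormedAddCommGroup E] [NormedSpace ℝ E]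
    [CompleteSpace E] {φ : ℝ → E} (hφ : Integrable φ) (hφc : Continuous φ) (x : ℝ) :
    HasDerivAt (fun s => ∫ τ in Ici s, φ τ) (-φ x) x := by
  have h : (fun s => ∫ τ in Ici s, φ τ) =
      fun s => (∫ τ in Ioi 0, φ τ) - ∫ τ in (0 : ℝ)..s, φ τ := by
    ext s
    rw [integral_Ici_eq_integral_Ioi, ← intervalIntegral.integral_Ioi_sub_Ioi' hφ.integrableOn
      hφ.integrableOn, sub_sub_cancel]
  rw [h]
  exact (hφc.integral_hasStrictDerivAt 0 x).hasDerivAt.const_sub _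

theorem norm_intervalIntegral_le_of_norm_le_deriv {E : Type*} [NormedAddCommGroup E]
    [NormedSpace ℝ E] {h : ℝ → E} {k k' : ℝ → ℝ} (hk : ∀ x, HasDerivAt k (k' x) x)
    (hk' : Continuous k') (hle : ∀ x, ‖h x‖ ≤ k' x) (a b : ℝ) :
    ‖∫ x in a..b, h x‖ ≤ |k b - k a| := by
  rw [← intervalIntegral.integral_eq_sub_of_hasDerivAt (fun x _ => hk x)
    (hk'.intervalIntegrable a b)]
  exact intervalIntegral.norm_integral_le_abs_of_norm_le (.of_forall hle)
    (hk'.intervalIntegrable a b)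

noncomputable def variationOfConstants (ψ Θ : ℝ → ℝ) (z : ℝ) : ℝ :=
  ψ z * ∫ ς in (0 : ℝ)..z, (ψ ς ^ 2)⁻¹ * ∫ τ in Ici ς, Θ τ * ψ τ

theorem neg_deriv_deriv_variationOfConstants {ψ ψ' V Θ : ℝ → ℝ}
    (hψ : ∀ x, HasDerivAt ψ (ψ' x) x) (hψ' : ∀ x, HasDerivAt ψ' (V x * ψ x) x)
    (hψ0 : ∀ x, ψ x ≠ 0) (hΘ : Continuous Θ) (hint : Integrable fun τ => Θ τ * ψ τ) (z : ℝ) :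
    -deriv (deriv (variationOfConstants ψ Θ)) z + V z * variationOfConstants ψ Θ z = Θ z := by
  set g : ℝ → ℝ := fun ς => ∫ τ in Ici ς, Θ τ * ψ τ
  have hψc : Continuous ψ := continuous_iff_continuousAt.2 fun x => (hψ x).continuousAt
  have hg : ∀ x, HasDerivAt g (-(Θ x * ψ x)) x := hasDerivAt_integral_Ici hint (hΘ.mul hψc)
  have hgc : Continuous g := continuous_iff_continuousAt.2 fun x => (hg x).continuousAt
  set G : ℝ → ℝ := fun z => ∫ ς in (0 : ℝ)..z, (ψ ς ^ 2)⁻¹ * g ς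
  have hG : ∀ x, HasDerivAt G ((ψ x ^ 2)⁻¹ * g x) x := fun x =>
    ((((hψc.pow 2).inv₀ fun y => pow_ne_zero 2 (hψ0 y)).mul hgc).integral_hasStrictDerivAt
      0 x).hasDerivAt
  have hu' : deriv (variationOfConstants ψ Θ) = fun x => ψ' x * G x + g x / ψ x := by
    ext x
    refine ((hψ x).mul (hG x)).deriv.trans ?_
    field_simp [hψ0 x]
  have hu'' : HasDerivAt (fun x => ψ' x * G x + g x / ψ x) _ z :=
    ((hψ' z).mul (hG z)).add ((hg z).div (hψ z) (hψ0 z))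
  rw [hu', hu''.deriv, show variationOfConstants ψ Θ z = ψ z * G z from rfl]
  field_simp [hψ0 z]
  ring

noncomputable def kinkSlope (a z : ℝ) : ℝ := a * (1 - tanh (a * z) ^ 2)

section kinkSlope

variable {a : ℝ}

theorem hasDerivAt_tanh_mul (a z : ℝ) :
    HasDerivAt (fun z => tanh (a * z)) (kinkSlope a z) z := by
  have h := (hasDerivAt_tanh (a * z)).comp z ((hasDerivAt_id' z).const_mul a)
  exact h.congr_deriv (by rw [mul_one, mul_comm]; rfl)

theorem continuous_tanh_mul (a : ℝ) : Continuous fun z => tanh (a * z) :=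
  continuous_iff_continuousAt.2 fun z => (hasDerivAt_tanh_mul a z).continuousAt

theorem kinkSlope_pos (ha : 0 < a) (z : ℝ) : 0 < kinkSlope a z :=
  mul_pos ha (sub_pos.2 (tanh_sq_lt_one _))

theorem hasDerivAt_kinkSlope (a z : ℝ) :
    HasDerivAt (kinkSlope a) (-2 * a * tanh (a * z) * kinkSlope a z) z := by
  have h := (((hasDerivAt_tanh_mul a z).pow 2).const_sub 1).const_mul a
  exact h.congr_deriv (by simp only [Nat.cast_ofNat]; ring)

theorem continuous_kinkSlope (a : ℝ) : Continuous (kinkSlope a) :=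
  continuous_iff_continuousAt.2 fun z => (hasDerivAt_kinkSlope a z).continuousAt

theorem hasDerivAt_deriv_kinkSlope (a z : ℝ) :
    HasDerivAt (fun z => -2 * a * tanh (a * z) * kinkSlope a z)
      (a ^ 2 * (6 * tanh (a * z) ^ 2 - 2) * kinkSlope a z) z := by
  have h := ((hasDerivAt_tanh_mul a z).const_mul (-2 * a)).mul (hasDerivAt_kinkSlope a z)
  refine h.congr_deriv ?_
  simp only [kinkSlope]
  ring

theorem integrable_kinkSlope (ha : 0 < a) : Integrable (kinkSlope a) := by
  refine integrable_of_intervalIntegral_norm_bounded (l := atTop) 2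
    (fun i => (continuous_kinkSlope a).integrableOn_Ioc) tendsto_neg_atTop_atBot tendsto_id
    (.of_forall fun i => ?_)
  have hpos : ∀ x, ‖kinkSlope a x‖ = kinkSlope a x := fun x =>
    Real.norm_of_nonneg (kinkSlope_pos ha x).le
  simp only [hpos, id]
  rw [intervalIntegral.integral_eq_sub_of_hasDerivAt (fun x _ => hasDerivAt_tanh_mul a x)
    ((continuous_kinkSlope a).intervalIntegrable _ _)]
  have h1 := abs_lt.1 (abs_tanh_lt_one (a * i))
  have h2 := abs_lt.1 (abs_tanh_lt_one (a * -i))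
  linarith

theorem integral_Ioi_kinkSlope (ha : 0 < a) (ς : ℝ) :
    ∫ τ in Ioi ς, kinkSlope a τ = 1 - tanh (a * ς) :=
  integral_Ioi_of_hasDerivAt_of_tendsto' (fun x _ => hasDerivAt_tanh_mul a x)
    (integrable_kinkSlope ha).integrableOn
    (tendsto_tanh_atTop.comp (tendsto_id.const_mul_atTop ha))

theorem integral_Iic_kinkSlope (ha : 0 < a) (ς : ℝ) :
    ∫ τ in Iic ς, kinkSlope a τ = tanh (a * ς) + 1 := by
  rw [integral_Iic_of_hasDerivAt_of_tendsto' (fun x _ => hasDerivAt_tanh_mul a x)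
    (integrable_kinkSlope ha).integrableOn
    (tendsto_tanh_atBot.comp (tendsto_id.const_mul_atBot ha)), sub_neg_eq_add]

theorem abs_integral_Ici_mul_kinkSlope_le (ha : 0 < a) {Θ : ℝ → ℝ} {M : ℝ}
    (hΘ : AEStronglyMeasurable Θ) (hM : ∀ τ, |Θ τ| ≤ M)
    (horth : ∫ τ, Θ τ * kinkSlope a τ = 0) (ς : ℝ) :
    |∫ τ in Ici ς, Θ τ * kinkSlope a τ| ≤ M * (1 - |tanh (a * ς)|) := by
  have hψ := integrable_kinkSlope ha
  have hint : Integrable fun τ => Θ τ * kinkSlope a τ := hψ.bdd_mul hΘ (.of_forall hM)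
  have hpt : ∀ τ, ‖Θ τ * kinkSlope a τ‖ ≤ M * kinkSlope a τ := fun τ => by
    rw [norm_mul, Real.norm_of_nonneg (kinkSlope_pos ha τ).le]
    exact mul_le_mul_of_nonneg_right (hM τ) (kinkSlope_pos ha τ).le
  have hIoi : |∫ τ in Ici ς, Θ τ * kinkSlope a τ| ≤ M * (1 - tanh (a * ς)) := by
    rw [integral_Ici_eq_integral_Ioi, ← integral_Ioi_kinkSlope ha, ← integral_const_mul]
    exact norm_integral_le_of_norm_le (hψ.integrableOn.const_mul M) (.of_forall hpt)
  -- orthogonality turns the tail over `[ς, ∞)` into minus the tail over `(-∞, ς]`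
  have hIic : |∫ τ in Ici ς, Θ τ * kinkSlope a τ| ≤ M * (1 + tanh (a * ς)) := by
    have hsplit := intervalIntegral.integral_Iic_add_Ioi (b := ς) hint.integrableOn
      hint.integrableOn
    rw [horth, add_eq_zero_iff_neg_eq] at hsplit
    rw [integral_Ici_eq_integral_Ioi, ← hsplit, abs_neg, add_comm, ← integral_Iic_kinkSlope ha,
      ← integral_const_mul]
    exact norm_integral_le_of_norm_le (hψ.integrableOn.const_mul M) (.of_forall hpt)
  rcases le_total 0 (tanh (a * ς)) with ht | ht
  · rwa [abs_of_nonneg ht]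
  · rwa [abs_of_nonpos ht, sub_neg_eq_add]

theorem hasDerivAt_tanh_mul_div_kinkSlope (ha : 0 < a) (z : ℝ) :
    HasDerivAt (fun z => tanh (a * z) / kinkSlope a z)
      (a * (1 + tanh (a * z) ^ 2) / kinkSlope a z) z := by
  have hψ := (kinkSlope_pos ha z).ne'
  refine ((hasDerivAt_tanh_mul a z).div (hasDerivAt_kinkSlope a z) hψ).congr_deriv ?_
  field_simp
  simp only [kinkSlope]
  ring

theorem norm_inv_sq_kinkSlope_mul_integral_Ici_le (ha : 0 < a) {Θ : ℝ → ℝ} {M : ℝ}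
    (hΘ : AEStronglyMeasurable Θ) (hM : ∀ τ, |Θ τ| ≤ M)
    (horth : ∫ τ, Θ τ * kinkSlope a τ = 0) (ς : ℝ) :
    ‖(kinkSlope a ς ^ 2)⁻¹ * ∫ τ in Ici ς, Θ τ * kinkSlope a τ‖ ≤
      M / a ^ 2 * (a * (1 + tanh (a * ς) ^ 2) / kinkSlope a ς) := by
  have hψ := kinkSlope_pos ha ς
  have hM0 : 0 ≤ M := (abs_nonneg _).trans (hM 0)
  have ht := abs_tanh_lt_one (a * ς)
  have hs0 := abs_nonneg (tanh (a * ς))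
  rw [norm_mul, norm_inv, norm_pow, Real.norm_of_nonneg hψ.le, Real.norm_eq_abs]
  calc (kinkSlope a ς ^ 2)⁻¹ * |∫ τ in Ici ς, Θ τ * kinkSlope a τ|
      ≤ (kinkSlope a ς ^ 2)⁻¹ * (M * (1 - |tanh (a * ς)|)) := by
        gcongr
        exact abs_integral_Ici_mul_kinkSlope_le ha hΘ hM horth ς
    _ ≤ M / a ^ 2 * (a * (1 + tanh (a * ς) ^ 2) / kinkSlope a ς) := by
      -- `1 - |t| ≤ 1 - t ^ 4` for `|t| < 1`
      simp only [kinkSlope]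
      rw [← sq_abs (tanh (a * ς))]
      generalize |tanh (a * ς)| = s at *
      have h1 : 0 < 1 - s := by linarith
      rw [show 1 - s ^ 2 = (1 - s) * (1 + s) by ring]
      field_simp
      nlinarith [mul_nonneg hM0 (mul_nonneg hs0 (mul_nonneg hs0 hs0)), mul_nonneg hM0 hs0]

theorem abs_variationOfConstants_kinkSlope_le (ha : 0 < a) {Θ : ℝ → ℝ} {M : ℝ}
    (hΘ : AEStronglyMeasurable Θ) (hM : ∀ τ, |Θ τ| ≤ M)
    (horth : ∫ τ, Θ τ * kinkSlope a τ = 0) (z : ℝ) :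
    |variationOfConstants (kinkSlope a) Θ z| ≤ M / a ^ 2 := by
  have hψ := kinkSlope_pos ha
  have hM0 : 0 ≤ M := (abs_nonneg _).trans (hM 0)
  have hk' : Continuous fun z => M / a ^ 2 * (a * (1 + tanh (a * z) ^ 2) / kinkSlope a z) :=
    continuous_const.mul ((continuous_const.mul (continuous_const.add
      ((continuous_tanh_mul a).pow 2))).div (continuous_kinkSlope a) fun x => (hψ x).ne')
  have hG := norm_intervalIntegral_le_of_norm_le_deriv
    (fun x => (hasDerivAt_tanh_mul_div_kinkSlope ha x).const_mul (M / a ^ 2)) hk'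
    (norm_inv_sq_kinkSlope_mul_integral_Ici_le ha hΘ hM horth) 0 z
  simp only [mul_zero, tanh_zero, zero_div, sub_zero, Real.norm_eq_abs] at hG
  calc |variationOfConstants (kinkSlope a) Θ z|
      = kinkSlope a z * |∫ ς in (0 : ℝ)..z,
          (kinkSlope a ς ^ 2)⁻¹ * ∫ τ in Ici ς, Θ τ * kinkSlope a τ| := by
        rw [variationOfConstants, abs_mul, abs_of_pos (hψ z)]
    _ ≤ kinkSlope a z * |M / a ^ 2 * (tanh (a * z) / kinkSlope a z)| :=
        mul_le_mul_of_nonneg_left hG (hψ z).le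
    _ = M / a ^ 2 * |tanh (a * z)| := by
        rw [abs_mul, abs_of_nonneg (by positivity : 0 ≤ M / a ^ 2), abs_div, abs_of_pos (hψ z)]
        field_simp [(hψ z).ne']
    _ ≤ M / a ^ 2 := mul_le_of_le_one_right (by positivity) (abs_tanh_lt_one _).le

end kinkSlope

theorem stmt_12 (f : ℝ → ℝ) (hf : ∀ u, f u = (u ^ 2 - 1) ^ 2)
    (θ : ℝ → ℝ) (hθ : ∀ z, θ z = Real.tanh (Real.sqrt 2 * z))
    (Θ : ℝ → ℝ) (hc : Continuous Θ)
    (C ν : ℝ) (hC : 0 < C) (hν : 0 < ν)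
    (hdecay : ∀ z, |Θ z| ≤ C * Real.exp (-ν * |z|))
    (horth : (∫ z : ℝ, Θ z * deriv θ z) = 0)
    (u₁ : ℝ → ℝ)
    (hu : ∀ z, u₁ z = deriv θ z *
      ∫ ς in (0 : ℝ)..z, ((deriv θ ς) ^ 2)⁻¹ * ∫ τ in Set.Ici ς, Θ τ * deriv θ τ) :
    (∃ M : ℝ, ∀ z, |u₁ z| ≤ M) ∧
    (∀ z, -(deriv (deriv u₁) z) + deriv (deriv f) (θ z) * u₁ z = Θ z) := by
  have ha : (0 : ℝ) < √2 := by positivity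
  have hθ' : deriv θ = kinkSlope √2 := funext fun z => by
    rw [show θ = fun z => tanh (√2 * z) from funext hθ]
    exact (hasDerivAt_tanh_mul _ z).deriv
  have hf' : deriv f = fun u => 4 * u ^ 3 - 4 * u := funext fun u => by
    rw [show f = fun u => (u ^ 2 - 1) ^ 2 from funext hf]
    exact ((((hasDerivAt_pow 2 u).sub_const 1).pow 2).congr_deriv (by ring)).deriv
  have hf'' : ∀ u, deriv (deriv f) u = 12 * u ^ 2 - 4 := fun u => by
    rw [hf']
    exact (((hasDerivAt_pow 3 u).const_mul 4).sub ((hasDerivAt_id' u).const_mul 4)).deriv.trans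
      (by ring)
  have hu₁ : u₁ = variationOfConstants (kinkSlope √2) Θ := funext fun z => by
    rw [hu z, hθ']
    rfl
  rw [hθ'] at horth
  have hM : ∀ z, |Θ z| ≤ C := fun z =>
    (hdecay z).trans (mul_le_of_le_one_right hC.le (exp_le_one_iff.2 (by nlinarith [abs_nonneg z])))
  refine ⟨⟨C / √2 ^ 2, fun z => hu₁ ▸
    abs_variationOfConstants_kinkSlope_le ha hc.aestronglyMeasurable hM horth z⟩, fun z => ?_⟩
  rw [hu₁, hf'', hθ z, ← neg_deriv_deriv_variationOfConstants (hasDerivAt_kinkSlope _)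
    (hasDerivAt_deriv_kinkSlope _) (fun x => (kinkSlope_pos ha x).ne') hc
    ((integrable_kinkSlope ha).bdd_mul hc.aestronglyMeasurable (.of_forall hM)) z,
    sq_sqrt zero_le_two]
  ring
end

section
/- Suppose Θ : [0,T] → [0,∞) is continuous, nondecreasing, Θ(0) = 0, and satisfies Θ(t)^p ≤ A (ε^{-1}Θ(t)^p + B Θ(t))^{θp/4} (ε^{-1-2/p}Θ(t)^2 + ε^{-2}Θ(t)^p + ε^{-1}BΘ(t))^{(1/2 - θ/4)p} + A(ε^{-1}Θ(t)^p + BΘ(t))^{p/2} for all t ∈ [0,T], where p ∈ (2,3], θ ∈ (0,1), A > 0, B = ε^m with m large, and the exponents satisfy θp/4 + 2(1/2 - θ/4) > 1 and p/2 > 1. Then for ε small enough and m large enough there exists γ > 1 with Θ(T) ≤ ε^γ. -/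
open Real Set

theorem stmt_15 (p θ A : ℝ) (hp2 : 2 < p) (hp3 : p ≤ 3)
    (hθ0 : 0 < θ) (hθ1 : θ < 1) (hA : 0 < A)
    (hexp1 : θ * p / 4 + 2 * (1 / 2 - θ / 4) > 1) (hexp2 : p / 2 > 1) :
    ∃ ε₀ > (0 : ℝ), ∃ m₀ : ℕ, ∀ ε : ℝ, 0 < ε → ε < ε₀ → ∀ m : ℕ, m₀ ≤ m →
      ∀ T : ℝ, 0 < T → ∀ Θ : ℝ → ℝ,
        ContinuousOn Θ (Icc 0 T) → MonotoneOn Θ (Icc 0 T) →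
        (∀ t ∈ Icc 0 T, 0 ≤ Θ t) → Θ 0 = 0 →
        (∀ t ∈ Icc 0 T,
          Θ t ^ p ≤
            A * (ε⁻¹ * Θ t ^ p + ε ^ m * Θ t) ^ (θ * p / 4) *
              (ε ^ (-1 - 2 / p) * Θ t ^ 2 + ε ^ (-2 : ℝ) * Θ t ^ p
                + ε⁻¹ * ε ^ m * Θ t) ^ ((1 / 2 - θ / 4) * p) +
            A * (ε⁻¹ * Θ t ^ p + ε ^ m * Θ t) ^ (p / 2)) →
        ∃ γ > (1 : ℝ), Θ T ≤ ε ^ γ := by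
  have hp0 : (0:ℝ) < p := by linarith
  have hp2' : (0:ℝ) < p - 2 := by linarith
  have h2p : (0:ℝ) < 2 / p := by positivity
  set a : ℝ := θ * p / 4 with ha_def
  set b : ℝ := (1 / 2 - θ / 4) * p with hb_def
  clear_value a b
  have ha : 0 < a := by rw [ha_def]; positivity
  have hb : 0 < b := by rw [hb_def]; nlinarith
  have hab : a + b = p / 2 := by rw [ha_def, hb_def]; ring
  set K : ℝ := a + b + 2 * b / p with hK_def
  clear_value K
  have hK : 0 < K := by rw [hK_def]; positivity
  set γ : ℝ := 1 + 1 / (p - 2) + K / (a * (p - 2)) with hγ_def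
  clear_value γ
  have hγ1 : 1 < γ := by
    have h1 := div_pos one_pos hp2'
    have h2 := div_pos hK (mul_pos ha hp2')
    rw [hγ_def]; linarith
  have hγ0 : 0 < γ := lt_trans one_pos hγ1
  have hγeq : γ * (a * (p - 2)) = a * (p - 2) + a + K := by
    rw [hγ_def]; field_simp
  have hγpm2 : 1 < γ * (p - 2) := by
    have h1 : γ * (p - 2) = (p - 2) + 1 + K / a := by
      rw [hγ_def]; field_simp
    have h2 := div_pos hK ha
    linarith
  have hE1 : γ * p < (γ * p - 1) * a + (2 * γ - 1 - 2 / p) * b := by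
    have hid : (γ * p - 1) * a + (2 * γ - 1 - 2 / p) * b - γ * p
        = γ * (a * (p - 2)) - K := by
      rw [hK_def]; linear_combination (2 * γ) * hab
    have h3 := mul_pos ha hp2'
    linarith [hid, hγeq]
  have hE2 : γ * p < (γ * p - 1) * (p / 2) := by
    have hr : (γ * p - 1) * (p / 2) - γ * p = p * (γ * (p - 2) - 1) / 2 := by ring
    have h1 := mul_pos hp0 (sub_pos.mpr hγpm2)
    linarith
  set δ : ℝ := min ((γ * p - 1) * a + (2 * γ - 1 - 2 / p) * b - γ * p)
      ((γ * p - 1) * (p / 2) - γ * p) with hδ_def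
  clear_value δ
  have hδ : 0 < δ := by rw [hδ_def]; exact lt_min (by linarith) (by linarith)
  have hδ1 : δ ≤ (γ * p - 1) * a + (2 * γ - 1 - 2 / p) * b - γ * p := by
    rw [hδ_def]; exact min_le_left _ _
  have hδ2 : δ ≤ (γ * p - 1) * (p / 2) - γ * p := by
    rw [hδ_def]; exact min_le_right _ _
  set C : ℝ := A * ((2:ℝ) ^ a * (3:ℝ) ^ b) + A * (2:ℝ) ^ (p / 2) with hC_def
  clear_value C
  have hC : 0 < C := by
    rw [hC_def]
    have h1 := Real.rpow_pos_of_pos (by norm_num : (0:ℝ) < 2) a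
    have h2 := Real.rpow_pos_of_pos (by norm_num : (0:ℝ) < 3) b
    have h3 := Real.rpow_pos_of_pos (by norm_num : (0:ℝ) < 2) (p / 2)
    positivity
  refine ⟨min (1/2) ((2 * C)⁻¹ ^ (1 / δ : ℝ)),
    lt_min (by norm_num) (Real.rpow_pos_of_pos (by positivity) _), ⌈γ * p⌉₊, ?_⟩
  intro ε hε0 hεlt m hm T hT Θ hΘc hΘm hΘnn hΘ0 hrec
  have hε1 : ε < 1 := lt_of_lt_of_le hεlt (le_trans (min_le_left _ _) (by norm_num))
  have hεle1 : ε ≤ 1 := hε1.le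
  have hmge : γ * p ≤ (m : ℝ) := le_trans (Nat.le_ceil _) (Nat.cast_le.mpr hm)
  refine ⟨γ, hγ1, ?_⟩
  by_contra hcon
  push_neg at hcon
  have hxmem : ε ^ γ ∈ Icc (Θ 0) (Θ T) :=
    ⟨by rw [hΘ0]; exact (Real.rpow_pos_of_pos hε0 γ).le, hcon.le⟩
  obtain ⟨t, ht, hΘt⟩ := intermediate_value_Icc hT.le hΘc hxmem
  have hle := hrec t ht
  rw [hΘt] at hle
  refine absurd hle (not_le.mpr ?_)
  have hxp : (ε ^ γ) ^ p = ε ^ (γ * p) := (Real.rpow_mul hε0.le γ p).symm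
  -- bound the first bracket
  have hS1 : ε⁻¹ * (ε ^ γ) ^ p + ε ^ m * ε ^ γ ≤ 2 * ε ^ (γ * p - 1) := by
    have e1 : ε⁻¹ * (ε ^ γ) ^ p = ε ^ (γ * p - 1) := by
      rw [hxp, ← Real.rpow_neg_one ε, ← Real.rpow_add hε0]
      congr 1; ring
    have e2 : ε ^ m * ε ^ γ = ε ^ ((m : ℝ) + γ) := by
      rw [← Real.rpow_natCast ε m, ← Real.rpow_add hε0]
    have e3 : ε ^ ((m : ℝ) + γ) ≤ ε ^ (γ * p - 1) :=
      Real.rpow_le_rpow_of_exponent_ge hε0 hεle1 (by linarith)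
    rw [e1, e2]; linarith
  -- bound the second bracket
  have hS2 : ε ^ (-1 - 2 / p) * (ε ^ γ) ^ 2 + ε ^ (-2 : ℝ) * (ε ^ γ) ^ p
      + ε⁻¹ * ε ^ m * ε ^ γ ≤ 3 * ε ^ (2 * γ - 1 - 2 / p) := by
    have t1 : ε ^ (-1 - 2 / p) * (ε ^ γ) ^ 2 = ε ^ (2 * γ - 1 - 2 / p) := by
      rw [pow_two, ← Real.rpow_add hε0, ← Real.rpow_add hε0]
      congr 1; ring
    have t2 : ε ^ (-2 : ℝ) * (ε ^ γ) ^ p = ε ^ (γ * p - 2) := by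
      rw [hxp, ← Real.rpow_add hε0]; congr 1; ring
    have t2' : ε ^ (γ * p - 2) ≤ ε ^ (2 * γ - 1 - 2 / p) :=
      Real.rpow_le_rpow_of_exponent_ge hε0 hεle1 (by
        have hr : γ * p - 2 * γ = γ * (p - 2) := by ring
        linarith)
    have t3 : ε⁻¹ * ε ^ m * ε ^ γ = ε ^ (-1 + (m : ℝ) + γ) := by
      rw [← Real.rpow_neg_one ε, ← Real.rpow_natCast ε m, ← Real.rpow_add hε0,
        ← Real.rpow_add hε0]
    have t3' : ε ^ (-1 + (m : ℝ) + γ) ≤ ε ^ (2 * γ - 1 - 2 / p) :=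
      Real.rpow_le_rpow_of_exponent_ge hε0 hεle1 (by
        have hr : γ * p = 2 * γ + γ * (p - 2) := by ring
        linarith)
    rw [t1, t2, t3]; linarith
  have hS1nn : 0 ≤ ε⁻¹ * (ε ^ γ) ^ p + ε ^ m * ε ^ γ := by positivity
  have hS2nn : 0 ≤ ε ^ (-1 - 2 / p) * (ε ^ γ) ^ 2 + ε ^ (-2 : ℝ) * (ε ^ γ) ^ p
      + ε⁻¹ * ε ^ m * ε ^ γ := by positivity
  have P1 : (ε⁻¹ * (ε ^ γ) ^ p + ε ^ m * ε ^ γ) ^ a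
      ≤ (2:ℝ) ^ a * ε ^ ((γ * p - 1) * a) := by
    calc (ε⁻¹ * (ε ^ γ) ^ p + ε ^ m * ε ^ γ) ^ a
        ≤ (2 * ε ^ (γ * p - 1)) ^ a := Real.rpow_le_rpow hS1nn hS1 ha.le
      _ = (2:ℝ) ^ a * ε ^ ((γ * p - 1) * a) := by
          rw [Real.mul_rpow (by norm_num) (Real.rpow_nonneg hε0.le _),
            ← Real.rpow_mul hε0.le]
  have P2 : (ε ^ (-1 - 2 / p) * (ε ^ γ) ^ 2 + ε ^ (-2 : ℝ) * (ε ^ γ) ^ p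
      + ε⁻¹ * ε ^ m * ε ^ γ) ^ b ≤ (3:ℝ) ^ b * ε ^ ((2 * γ - 1 - 2 / p) * b) := by
    calc (ε ^ (-1 - 2 / p) * (ε ^ γ) ^ 2 + ε ^ (-2 : ℝ) * (ε ^ γ) ^ p
        + ε⁻¹ * ε ^ m * ε ^ γ) ^ b
        ≤ (3 * ε ^ (2 * γ - 1 - 2 / p)) ^ b := Real.rpow_le_rpow hS2nn hS2 hb.le
      _ = (3:ℝ) ^ b * ε ^ ((2 * γ - 1 - 2 / p) * b) := by
          rw [Real.mul_rpow (by norm_num) (Real.rpow_nonneg hε0.le _),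
            ← Real.rpow_mul hε0.le]
  have P3 : (ε⁻¹ * (ε ^ γ) ^ p + ε ^ m * ε ^ γ) ^ (p / 2)
      ≤ (2:ℝ) ^ (p / 2) * ε ^ ((γ * p - 1) * (p / 2)) := by
    calc (ε⁻¹ * (ε ^ γ) ^ p + ε ^ m * ε ^ γ) ^ (p / 2)
        ≤ (2 * ε ^ (γ * p - 1)) ^ (p / 2) :=
          Real.rpow_le_rpow hS1nn hS1 (by positivity)
      _ = (2:ℝ) ^ (p / 2) * ε ^ ((γ * p - 1) * (p / 2)) := by
          rw [Real.mul_rpow (by norm_num) (Real.rpow_nonneg hε0.le _),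
            ← Real.rpow_mul hε0.le]
  have hred1 : ε ^ ((γ * p - 1) * a + (2 * γ - 1 - 2 / p) * b)
      ≤ ε ^ (γ * p) * ε ^ δ := by
    rw [← Real.rpow_add hε0]
    exact Real.rpow_le_rpow_of_exponent_ge hε0 hεle1 (by linarith)
  have hred2 : ε ^ ((γ * p - 1) * (p / 2)) ≤ ε ^ (γ * p) * ε ^ δ := by
    rw [← Real.rpow_add hε0]
    exact Real.rpow_le_rpow_of_exponent_ge hε0 hεle1 (by linarith)
  have hεδ : C * ε ^ δ < 1 := by
    have h1 : ε ^ δ < ((2 * C)⁻¹ ^ (1 / δ : ℝ)) ^ δ :=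
      Real.rpow_lt_rpow hε0.le (lt_of_lt_of_le hεlt (min_le_right _ _)) hδ
    have h2 : ((2 * C)⁻¹ ^ (1 / δ : ℝ)) ^ δ = (2 * C)⁻¹ := by
      rw [← Real.rpow_mul (by positivity : (0:ℝ) ≤ (2 * C)⁻¹), one_div,
        inv_mul_cancel₀ hδ.ne', Real.rpow_one]
    have h3 : ε ^ δ < (2 * C)⁻¹ := h2 ▸ h1
    have h4 : C * (2 * C)⁻¹ = 1 / 2 := by
      field_simp
    have h5 : C * ε ^ δ < C * (2 * C)⁻¹ := by
      exact mul_lt_mul_of_pos_left h3 hC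
    linarith
  have hterm1 : A * (ε⁻¹ * (ε ^ γ) ^ p + ε ^ m * ε ^ γ) ^ a
      * (ε ^ (-1 - 2 / p) * (ε ^ γ) ^ 2 + ε ^ (-2 : ℝ) * (ε ^ γ) ^ p
        + ε⁻¹ * ε ^ m * ε ^ γ) ^ b
      ≤ A * ((2:ℝ) ^ a * (3:ℝ) ^ b) * (ε ^ (γ * p) * ε ^ δ) := by
    have h1 : A * (ε⁻¹ * (ε ^ γ) ^ p + ε ^ m * ε ^ γ) ^ a
        ≤ A * ((2:ℝ) ^ a * ε ^ ((γ * p - 1) * a)) := mul_le_mul_of_nonneg_left P1 hA.le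
    have h2 := mul_le_mul h1 P2 (Real.rpow_nonneg hS2nn b) (by positivity)
    have h3 : A * ((2:ℝ) ^ a * ε ^ ((γ * p - 1) * a))
        * ((3:ℝ) ^ b * ε ^ ((2 * γ - 1 - 2 / p) * b))
        = A * ((2:ℝ) ^ a * (3:ℝ) ^ b)
          * ε ^ ((γ * p - 1) * a + (2 * γ - 1 - 2 / p) * b) := by
      rw [Real.rpow_add hε0]; ring
    calc A * (ε⁻¹ * (ε ^ γ) ^ p + ε ^ m * ε ^ γ) ^ a
        * (ε ^ (-1 - 2 / p) * (ε ^ γ) ^ 2 + ε ^ (-2 : ℝ) * (ε ^ γ) ^ p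
          + ε⁻¹ * ε ^ m * ε ^ γ) ^ b
        ≤ A * ((2:ℝ) ^ a * (3:ℝ) ^ b)
          * ε ^ ((γ * p - 1) * a + (2 * γ - 1 - 2 / p) * b) := by rw [← h3]; exact h2
      _ ≤ A * ((2:ℝ) ^ a * (3:ℝ) ^ b) * (ε ^ (γ * p) * ε ^ δ) :=
          mul_le_mul_of_nonneg_left hred1 (by positivity)
  have hterm2 : A * (ε⁻¹ * (ε ^ γ) ^ p + ε ^ m * ε ^ γ) ^ (p / 2)
      ≤ A * (2:ℝ) ^ (p / 2) * (ε ^ (γ * p) * ε ^ δ) := by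
    calc A * (ε⁻¹ * (ε ^ γ) ^ p + ε ^ m * ε ^ γ) ^ (p / 2)
        ≤ A * ((2:ℝ) ^ (p / 2) * ε ^ ((γ * p - 1) * (p / 2))) :=
          mul_le_mul_of_nonneg_left P3 hA.le
      _ = A * (2:ℝ) ^ (p / 2) * ε ^ ((γ * p - 1) * (p / 2)) := by ring
      _ ≤ A * (2:ℝ) ^ (p / 2) * (ε ^ (γ * p) * ε ^ δ) :=
          mul_le_mul_of_nonneg_left hred2 (by positivity)
  have hsum : A * (ε⁻¹ * (ε ^ γ) ^ p + ε ^ m * ε ^ γ) ^ a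
      * (ε ^ (-1 - 2 / p) * (ε ^ γ) ^ 2 + ε ^ (-2 : ℝ) * (ε ^ γ) ^ p
        + ε⁻¹ * ε ^ m * ε ^ γ) ^ b
      + A * (ε⁻¹ * (ε ^ γ) ^ p + ε ^ m * ε ^ γ) ^ (p / 2)
      ≤ C * ε ^ δ * ε ^ (γ * p) := by
    have hCe : A * ((2:ℝ) ^ a * (3:ℝ) ^ b) * (ε ^ (γ * p) * ε ^ δ)
        + A * (2:ℝ) ^ (p / 2) * (ε ^ (γ * p) * ε ^ δ) = C * ε ^ δ * ε ^ (γ * p) := by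
      rw [hC_def]; ring
    linarith
  calc A * (ε⁻¹ * (ε ^ γ) ^ p + ε ^ m * ε ^ γ) ^ a
      * (ε ^ (-1 - 2 / p) * (ε ^ γ) ^ 2 + ε ^ (-2 : ℝ) * (ε ^ γ) ^ p
        + ε⁻¹ * ε ^ m * ε ^ γ) ^ b
      + A * (ε⁻¹ * (ε ^ γ) ^ p + ε ^ m * ε ^ γ) ^ (p / 2)
      ≤ C * ε ^ δ * ε ^ (γ * p) := hsum
    _ < 1 * ε ^ (γ * p) := mul_lt_mul_of_pos_right hεδ (Real.rpow_pos_of_pos hε0 _)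
    _ = (ε ^ γ) ^ p := by rw [one_mul, hxp]
end

section
/- Let f(u) = (u^2-1)^2, θ(z) = tanh(√2 z), and let λ₁ be the smallest eigenvalue of the Neumann problem -q'' + f''(θ)q = λq on (-1/ε, 1/ε) with q'(±1/ε) = 0. Then λ₁ ≤ C e^{-c/ε} for constants c, C > 0 independent of small ε; in particular λ₁ → 0 as ε → 0. (Upper bound obtained by using the normalized test function θ'/‖θ'‖_{L²(-1/ε,1/ε)}.) -/
open Real Set Filter MeasureTheory

/-- The first Neumann eigenvalue of `-q'' + f''(θ) q = λ q` on `(-1/ε, 1/ε)`,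
characterized variationally as the infimum of the Rayleigh quotient over
`L²`-normalized `H¹` functions, with `f(u) = (u²-1)²` (so `f''(u) = 12u² - 4`)
and `θ(z) = tanh(√2 z)`. -/
noncomputable def lambda1 (ε : ℝ) : ℝ :=
  sInf {R : ℝ | ∃ q : ℝ → ℝ, ContDiff ℝ 1 q ∧
    (∫ z in Icc (-(1 / ε)) (1 / ε), (q z) ^ 2) = 1 ∧
    R = ∫ z in Icc (-(1 / ε)) (1 / ε),
      ((deriv q z) ^ 2 + (12 * (Real.tanh (Real.sqrt 2 * z)) ^ 2 - 4) * (q z) ^ 2)}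

/-!
The zero mode `p = sech² (√2 z)` of the kink solves `-p'' + f''(θ) p = 0`, so its Rayleigh
quotient on `[-L, L]` is the boundary term `2 p(L) p'(L) ≤ 0` divided by `‖p‖²`; hence `λ₁ ≤ 0`.
For a matching lower bound apply Picone's identity with the positive weight
`w = sech² (√2 z) + A cosh (2√2 z)`, where `A = 1 / (2 cosh⁴ (√2 L))` makes `w'(±L) = 0`.
Since `cosh (2√2 z)'' = 8 cosh (2√2 z)` and `f''(θ) - 8 = -12 sech² (√2 z)`, one finds
`f''(θ) - w''/w ≥ -12 A cosh (2√2 L) ≥ -12 sech² (√2 L)`, so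
`-12 sech² (√2 / ε) ≤ λ₁ ≤ 0` and the lower bound is `O(e^{-2√2/ε})`.
-/

open Topology intervalIntegral

def rayleighQuotients (V : ℝ → ℝ) (a b : ℝ) : Set ℝ :=
  {R | ∃ q : ℝ → ℝ, ContDiff ℝ 1 q ∧ (∫ z in Icc a b, q z ^ 2) = 1 ∧
    R = ∫ z in Icc a b, (deriv q z ^ 2 + V z * q z ^ 2)}

section RayleighQuotient

variable {a b ρ : ℝ} {V w w' w'' p p' q : ℝ → ℝ}

theorem setIntegral_Icc_eq_intervalIntegral (hab : a ≤ b) (f : ℝ → ℝ) :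
    ∫ x in Icc a b, f x = ∫ x in a..b, f x := by
  rw [integral_Icc_eq_integral_Ioc, integral_of_le hab]

/-- `(w' / w · q²)'`, the exact-derivative term in Picone's identity. -/
noncomputable def piconeTerm (w w' w'' q : ℝ → ℝ) (x : ℝ) : ℝ :=
  (w'' x * w x - w' x ^ 2) / w x ^ 2 * q x ^ 2 + w' x / w x * (2 * q x * deriv q x)

theorem picone_identity {x : ℝ} (hw : w x ≠ 0) :
    deriv q x ^ 2 + V x * q x ^ 2 = (deriv q x - w' x / w x * q x) ^ 2
      + (V x * w x - w'' x) / w x * q x ^ 2 + piconeTerm w w' w'' q x := by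
  rw [piconeTerm]
  field_simp
  ring

theorem hasDerivAt_div_mul_sq (hw : ∀ x ∈ uIcc a b, HasDerivAt w (w' x) x)
    (hw' : ∀ x ∈ uIcc a b, HasDerivAt w' (w'' x) x) (hw_ne : ∀ x ∈ uIcc a b, w x ≠ 0)
    (hq : ContDiff ℝ 1 q) {x : ℝ} (hx : x ∈ uIcc a b) :
    HasDerivAt (fun y => w' y / w y * q y ^ 2) (piconeTerm w w' w'' q x) x := by
  refine (((hw' x hx).div (hw x hx) (hw_ne x hx)).mul
    ((hq.differentiable one_ne_zero x).hasDerivAt.pow 2)).congr_deriv ?_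
  simp only [piconeTerm, Pi.pow_apply, Pi.div_apply]
  ring

theorem continuousOn_piconeTerm (hw : ∀ x ∈ uIcc a b, HasDerivAt w (w' x) x)
    (hw' : ∀ x ∈ uIcc a b, HasDerivAt w' (w'' x) x) (hw'' : ContinuousOn w'' (uIcc a b))
    (hw_ne : ∀ x ∈ uIcc a b, w x ≠ 0) (hq : ContDiff ℝ 1 q) :
    ContinuousOn (piconeTerm w w' w'' q) (uIcc a b) := by
  have hqc := hq.continuous.continuousOn (s := uIcc a b)
  have hq'c := (hq.continuous_deriv le_rfl).continuousOn (s := uIcc a b)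
  have hwc : ContinuousOn w (uIcc a b) := fun x hx => (hw x hx).continuousAt.continuousWithinAt
  have hw'c : ContinuousOn w' (uIcc a b) :=
    fun x hx => (hw' x hx).continuousAt.continuousWithinAt
  exact ((((hw''.mul hwc).sub (hw'c.pow 2)).div (hwc.pow 2)
    fun x hx => pow_ne_zero 2 (hw_ne x hx)).mul (hqc.pow 2)).add
    ((hw'c.div hwc hw_ne).mul ((continuousOn_const.mul hqc).mul hq'c))

theorem integral_piconeTerm_eq_zero (hw : ∀ x ∈ uIcc a b, HasDerivAt w (w' x) x)
    (hw' : ∀ x ∈ uIcc a b, HasDerivAt w' (w'' x) x) (hw'' : ContinuousOn w'' (uIcc a b))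
    (hw_ne : ∀ x ∈ uIcc a b, w x ≠ 0) (ha : w' a = 0) (hb : w' b = 0) (hq : ContDiff ℝ 1 q) :
    ∫ x in a..b, piconeTerm w w' w'' q x = 0 := by
  rw [integral_eq_sub_of_hasDerivAt (fun x hx => hasDerivAt_div_mul_sq hw hw' hw_ne hq hx)
    (continuousOn_piconeTerm hw hw' hw'' hw_ne hq).intervalIntegrable, ha, hb]
  simp

theorem neg_mul_integral_sq_le_integral_deriv_sq_add_mul_sq (hab : a ≤ b)
    (hw : ∀ x ∈ Icc a b, HasDerivAt w (w' x) x) (hw' : ∀ x ∈ Icc a b, HasDerivAt w' (w'' x) x)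
    (hw'' : ContinuousOn w'' (Icc a b)) (hw_pos : ∀ x ∈ Icc a b, 0 < w x)
    (ha : w' a = 0) (hb : w' b = 0) (hV : ContinuousOn V (Icc a b))
    (hρ : ∀ x ∈ Icc a b, -ρ * w x ≤ V x * w x - w'' x) (hq : ContDiff ℝ 1 q) :
    -ρ * ∫ x in a..b, q x ^ 2 ≤ ∫ x in a..b, (deriv q x ^ 2 + V x * q x ^ 2) := by
  have hw_ne : ∀ x ∈ uIcc a b, w x ≠ 0 := fun x hx => (hw_pos x (uIcc_of_le hab ▸ hx)).ne'
  rw [← uIcc_of_le hab] at hw hw' hw'' hV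
  have hqc := hq.continuous.continuousOn (s := uIcc a b)
  have hq_sq : IntervalIntegrable (fun x => -ρ * q x ^ 2) volume a b :=
    (continuousOn_const.mul (hqc.pow 2)).intervalIntegrable
  have hD := continuousOn_piconeTerm hw hw' hw'' hw_ne hq
  calc -ρ * ∫ x in a..b, q x ^ 2
      = ∫ x in a..b, (-ρ * q x ^ 2 + piconeTerm w w' w'' q x) := by
        rw [integral_add hq_sq hD.intervalIntegrable,
          integral_piconeTerm_eq_zero hw hw' hw'' hw_ne ha hb hq,
          intervalIntegral.integral_const_mul, add_zero]
    _ ≤ ∫ x in a..b, (deriv q x ^ 2 + V x * q x ^ 2) := by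
        have hRayleigh : ContinuousOn (fun x => deriv q x ^ 2 + V x * q x ^ 2) (uIcc a b) :=
          ((hq.continuous_deriv le_rfl).continuousOn.pow 2).add (hV.mul (hqc.pow 2))
        refine integral_mono_on hab (hq_sq.add hD.intervalIntegrable)
          hRayleigh.intervalIntegrable fun x hx => ?_
        have hρx : -ρ ≤ (V x * w x - w'' x) / w x := (le_div_iff₀ (hw_pos x hx)).mpr (hρ x hx)
        rw [picone_identity (w' := w') (w'' := w'') (hw_pos x hx).ne']
        exact add_le_add (le_add_of_nonneg_of_le (sq_nonneg _)
          (mul_le_mul_of_nonneg_right hρx (sq_nonneg _))) le_rfl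

theorem integral_deriv_sq_add_mul_sq_eq (hp : ∀ x ∈ uIcc a b, HasDerivAt p (p' x) x)
    (hp' : ∀ x ∈ uIcc a b, HasDerivAt p' (V x * p x) x) (hV : ContinuousOn V (uIcc a b)) :
    ∫ x in a..b, (p' x ^ 2 + V x * p x ^ 2) = p b * p' b - p a * p' a := by
  have hpc : ContinuousOn p (uIcc a b) := fun x hx => (hp x hx).continuousAt.continuousWithinAt
  have hp'c : ContinuousOn p' (uIcc a b) :=
    fun x hx => (hp' x hx).continuousAt.continuousWithinAt
  have hcont : ContinuousOn (fun x => p' x ^ 2 + V x * p x ^ 2) (uIcc a b) :=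
    (hp'c.pow 2).add (hV.mul (hpc.pow 2))
  refine integral_eq_sub_of_hasDerivAt (f := fun x => p x * p' x) (fun x hx => ?_)
    hcont.intervalIntegrable
  exact ((hp x hx).mul (hp' x hx)).congr_deriv (by ring)

theorem div_integral_sq_mem_rayleighQuotients (hab : a ≤ b) (hp : ContDiff ℝ 1 p)
    (hI : 0 < ∫ x in a..b, p x ^ 2) :
    (∫ x in a..b, (deriv p x ^ 2 + V x * p x ^ 2)) / (∫ x in a..b, p x ^ 2)
      ∈ rayleighQuotients V a b := by
  set N := √(∫ x in a..b, p x ^ 2)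
  have hN : N ^ 2 = ∫ x in a..b, p x ^ 2 := sq_sqrt hI.le
  have hN0 : N ≠ 0 := (sqrt_pos.mpr hI).ne'
  refine ⟨fun x => p x / N, hp.div_const N, ?_, ?_⟩
  · simp only [setIntegral_Icc_eq_intervalIntegral hab, div_pow, intervalIntegral.integral_div,
      hN]
    exact div_self hI.ne'
  · simp only [setIntegral_Icc_eq_intervalIntegral hab, deriv_div_const, ← hN]
    rw [← intervalIntegral.integral_div]
    congr 1 with x
    field_simp

theorem neg_le_of_mem_rayleighQuotients (hab : a ≤ b)
    (hw : ∀ x ∈ Icc a b, HasDerivAt w (w' x) x) (hw' : ∀ x ∈ Icc a b, HasDerivAt w' (w'' x) x)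
    (hw'' : ContinuousOn w'' (Icc a b)) (hw_pos : ∀ x ∈ Icc a b, 0 < w x)
    (ha : w' a = 0) (hb : w' b = 0) (hV : ContinuousOn V (Icc a b))
    (hρ : ∀ x ∈ Icc a b, -ρ * w x ≤ V x * w x - w'' x) {R : ℝ}
    (hR : R ∈ rayleighQuotients V a b) : -ρ ≤ R := by
  obtain ⟨q, hq, hq_norm, rfl⟩ := hR
  rw [setIntegral_Icc_eq_intervalIntegral hab] at hq_norm ⊢
  simpa [hq_norm] using
    neg_mul_integral_sq_le_integral_deriv_sq_add_mul_sq hab hw hw' hw'' hw_pos ha hb hV hρ hq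

end RayleighQuotient

noncomputable section

def kinkPotential (z : ℝ) : ℝ := 12 * tanh (√2 * z) ^ 2 - 4

theorem lambda1_eq_sInf (ε : ℝ) :
    lambda1 ε = sInf (rayleighQuotients kinkPotential (-(1 / ε)) (1 / ε)) := rfl

/-- `θ' / √2` for the kink `θ z = tanh (√2 z)`. -/
def kinkZeroMode (z : ℝ) : ℝ := 1 / cosh (√2 * z) ^ 2

def kinkZeroModeDeriv (z : ℝ) : ℝ := -2 * √2 * sinh (√2 * z) / cosh (√2 * z) ^ 3

theorem sq_sqrt_two : √2 ^ 2 = 2 := sq_sqrt zero_le_two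

theorem hasDerivAt_cosh_const_mul (k z : ℝ) :
    HasDerivAt (fun x => cosh (k * x)) (k * sinh (k * z)) z := by
  simpa [mul_comm] using ((hasDerivAt_id z).const_mul k).cosh

theorem hasDerivAt_sinh_const_mul (k z : ℝ) :
    HasDerivAt (fun x => sinh (k * x)) (k * cosh (k * z)) z := by
  simpa [mul_comm] using ((hasDerivAt_id z).const_mul k).sinh

theorem kinkPotential_eq (z : ℝ) : kinkPotential z = 8 - 12 * kinkZeroMode z := by
  have hc := (cosh_pos (√2 * z)).ne'
  rw [kinkPotential, kinkZeroMode, tanh_eq_sinh_div_cosh]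
  field_simp
  linear_combination (-12) * cosh_sq (√2 * z)

theorem kinkZeroMode_pos (z : ℝ) : 0 < kinkZeroMode z := by
  have := cosh_pos (√2 * z)
  unfold kinkZeroMode
  positivity

theorem hasDerivAt_kinkZeroMode (z : ℝ) : HasDerivAt kinkZeroMode (kinkZeroModeDeriv z) z := by
  have hc := (cosh_pos (√2 * z)).ne'
  refine ((hasDerivAt_const z (1 : ℝ)).div ((hasDerivAt_cosh_const_mul √2 z).pow 2)
    (pow_ne_zero 2 hc)).congr_deriv ?_
  rw [kinkZeroModeDeriv]
  simp only [Pi.pow_apply]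
  field_simp
  ring

theorem hasDerivAt_kinkZeroModeDeriv (z : ℝ) :
    HasDerivAt kinkZeroModeDeriv (kinkPotential z * kinkZeroMode z) z := by
  have hc := (cosh_pos (√2 * z)).ne'
  refine (((hasDerivAt_sinh_const_mul √2 z).const_mul (-2 * √2)).div
    ((hasDerivAt_cosh_const_mul √2 z).pow 3) (pow_ne_zero 3 hc)).congr_deriv ?_
  rw [kinkPotential_eq, kinkZeroMode]
  simp only [Pi.pow_apply]
  field_simp
  linear_combination
    2 * (3 * sinh (√2 * z) ^ 2 - cosh (√2 * z) ^ 2) * cosh (√2 * z) ^ 2 * sq_sqrt_two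
    - 12 * cosh (√2 * z) ^ 2 * cosh_sq (√2 * z)

theorem continuous_kinkZeroMode : Continuous kinkZeroMode :=
  continuous_iff_continuousAt.mpr fun z => (hasDerivAt_kinkZeroMode z).continuousAt

theorem continuous_kinkPotential : Continuous kinkPotential :=
  (continuous_const.sub (continuous_const.mul continuous_kinkZeroMode)).congr
    fun z => (kinkPotential_eq z).symm

theorem contDiff_kinkZeroMode : ContDiff ℝ 1 kinkZeroMode :=
  contDiff_const.div ((contDiff_const.mul contDiff_id).cosh.pow 2)
    fun _ => pow_ne_zero 2 (cosh_pos _).ne'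

theorem kinkZeroMode_neg (z : ℝ) : kinkZeroMode (-z) = kinkZeroMode z := by
  rw [kinkZeroMode, kinkZeroMode, mul_neg, cosh_neg]

theorem kinkZeroModeDeriv_neg (z : ℝ) : kinkZeroModeDeriv (-z) = -kinkZeroModeDeriv z := by
  rw [kinkZeroModeDeriv, kinkZeroModeDeriv, mul_neg, cosh_neg, sinh_neg]
  ring

theorem kinkZeroModeDeriv_nonpos {z : ℝ} (hz : 0 ≤ z) : kinkZeroModeDeriv z ≤ 0 := by
  have := sinh_nonneg_iff.mpr (mul_nonneg (sqrt_nonneg 2) hz)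
  have := cosh_pos (√2 * z)
  have := sqrt_nonneg 2
  unfold kinkZeroModeDeriv
  apply div_nonpos_of_nonpos_of_nonneg _ (by positivity)
  nlinarith

def kinkSupersolution (A z : ℝ) : ℝ := kinkZeroMode z + A * cosh (2 * √2 * z)

def kinkSupersolutionDeriv (A z : ℝ) : ℝ :=
  kinkZeroModeDeriv z + A * (2 * √2 * sinh (2 * √2 * z))

theorem hasDerivAt_kinkSupersolution (A z : ℝ) :
    HasDerivAt (kinkSupersolution A) (kinkSupersolutionDeriv A z) z :=
  (hasDerivAt_kinkZeroMode z).add ((hasDerivAt_cosh_const_mul _ z).const_mul A)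

theorem hasDerivAt_kinkSupersolutionDeriv (A z : ℝ) :
    HasDerivAt (kinkSupersolutionDeriv A)
      (kinkPotential z * kinkZeroMode z + A * (8 * cosh (2 * √2 * z))) z := by
  refine ((hasDerivAt_kinkZeroModeDeriv z).add
    (((hasDerivAt_sinh_const_mul _ z).const_mul (2 * √2)).const_mul A)).congr_deriv ?_
  linear_combination 4 * A * cosh (2 * √2 * z) * sq_sqrt_two

theorem kinkSupersolution_pos {A : ℝ} (hA : 0 ≤ A) (z : ℝ) : 0 < kinkSupersolution A z :=
  add_pos_of_pos_of_nonneg (kinkZeroMode_pos z) (mul_nonneg hA (cosh_pos _).le)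

theorem kinkPotential_mul_kinkSupersolution_sub (A z : ℝ) :
    kinkPotential z * kinkSupersolution A z
      - (kinkPotential z * kinkZeroMode z + A * (8 * cosh (2 * √2 * z)))
      = -(12 * A * cosh (2 * √2 * z) * kinkZeroMode z) := by
  rw [kinkSupersolution, kinkPotential_eq]
  ring

theorem kinkSupersolutionDeriv_self (L : ℝ) :
    kinkSupersolutionDeriv (2 * cosh (√2 * L) ^ 4)⁻¹ L = 0 := by
  have hc := (cosh_pos (√2 * L)).ne'
  rw [kinkSupersolutionDeriv, kinkZeroModeDeriv, show 2 * √2 * L = 2 * (√2 * L) by ring,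
    sinh_two_mul]
  field_simp
  ring

theorem kinkSupersolutionDeriv_neg_self (L : ℝ) :
    kinkSupersolutionDeriv (2 * cosh (√2 * L) ^ 4)⁻¹ (-L) = 0 := by
  simpa only [mul_neg, cosh_neg] using kinkSupersolutionDeriv_self (-L)

theorem neg_mul_kinkSupersolution_le {L z : ℝ} (hz : z ∈ Icc (-L) L) :
    -(12 * kinkZeroMode L) * kinkSupersolution (2 * cosh (√2 * L) ^ 4)⁻¹ z
      ≤ kinkPotential z * kinkSupersolution (2 * cosh (√2 * L) ^ 4)⁻¹ z
        - (kinkPotential z * kinkZeroMode z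
          + (2 * cosh (√2 * L) ^ 4)⁻¹ * (8 * cosh (2 * √2 * z))) := by
  have hc := cosh_pos (√2 * L)
  have hcosh : cosh (2 * √2 * z) ≤ cosh (2 * √2 * L) := by
    rw [cosh_le_cosh, abs_mul _ z, abs_mul _ L]
    exact mul_le_mul_of_nonneg_left ((abs_le.mpr hz).trans (le_abs_self L)) (abs_nonneg _)
  have hA_cosh : (2 * cosh (√2 * L) ^ 4)⁻¹ * cosh (2 * √2 * L)
      = kinkZeroMode L - (2 * cosh (√2 * L) ^ 4)⁻¹ := by
    rw [kinkZeroMode, show 2 * √2 * L = 2 * (√2 * L) by ring, cosh_two_mul]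
    field_simp
    linear_combination (-1) * cosh_sq (√2 * L)
  set A := (2 * cosh (√2 * L) ^ 4)⁻¹
  have hA : 0 ≤ A := by positivity
  have hA_cosh_le : A * cosh (2 * √2 * z) ≤ kinkZeroMode L := by
    linarith [mul_le_mul_of_nonneg_left hcosh hA]
  have hp_le : kinkZeroMode z ≤ kinkSupersolution A z :=
    le_add_of_nonneg_right (mul_nonneg hA (cosh_pos _).le)
  rw [kinkPotential_mul_kinkSupersolution_sub, neg_mul, neg_le_neg_iff]
  calc 12 * A * cosh (2 * √2 * z) * kinkZeroMode z
      ≤ 12 * kinkZeroMode L * kinkZeroMode z :=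
        mul_le_mul_of_nonneg_right (by linarith) (kinkZeroMode_pos z).le
    _ ≤ 12 * kinkZeroMode L * kinkSupersolution A z :=
        mul_le_mul_of_nonneg_left hp_le (by linarith [kinkZeroMode_pos L])

theorem exists_nonpos_mem_rayleighQuotients_kinkPotential {L : ℝ} (hL : 0 < L) :
    ∃ R ∈ rayleighQuotients kinkPotential (-L) L, R ≤ 0 := by
  have hI : 0 < ∫ x in -L..L, kinkZeroMode x ^ 2 :=
    intervalIntegral_pos_of_pos_on ((continuous_kinkZeroMode.pow 2).intervalIntegrable _ _)
      (fun x _ => pow_pos (kinkZeroMode_pos x) 2) (by linarith)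
  refine ⟨_, div_integral_sq_mem_rayleighQuotients (by linarith) contDiff_kinkZeroMode hI,
    div_nonpos_of_nonpos_of_nonneg ?_ hI.le⟩
  simp only [(hasDerivAt_kinkZeroMode _).deriv]
  rw [integral_deriv_sq_add_mul_sq_eq (fun x _ => hasDerivAt_kinkZeroMode x)
    (fun x _ => hasDerivAt_kinkZeroModeDeriv x) continuous_kinkPotential.continuousOn,
    kinkZeroMode_neg, kinkZeroModeDeriv_neg]
  nlinarith [kinkZeroModeDeriv_nonpos hL.le, kinkZeroMode_pos L]

theorem neg_le_of_mem_rayleighQuotients_kinkPotential {L R : ℝ} (hL : 0 ≤ L)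
    (hR : R ∈ rayleighQuotients kinkPotential (-L) L) : -(12 * kinkZeroMode L) ≤ R := by
  have hw'' : Continuous fun z => kinkPotential z * kinkZeroMode z
      + (2 * cosh (√2 * L) ^ 4)⁻¹ * (8 * cosh (2 * √2 * z)) := by
    have := continuous_kinkPotential
    have := continuous_kinkZeroMode
    fun_prop
  exact neg_le_of_mem_rayleighQuotients (by linarith)
    (fun x _ => hasDerivAt_kinkSupersolution _ x) (fun x _ => hasDerivAt_kinkSupersolutionDeriv _ x)
    hw''.continuousOn (fun x _ => kinkSupersolution_pos (by positivity) x)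
    (kinkSupersolutionDeriv_neg_self L) (kinkSupersolutionDeriv_self L)
    continuous_kinkPotential.continuousOn
    (fun _ hx => neg_mul_kinkSupersolution_le hx) hR

theorem neg_le_lambda1 {ε : ℝ} (hε : 0 < ε) : -(12 * kinkZeroMode (1 / ε)) ≤ lambda1 ε := by
  obtain ⟨R, hR, -⟩ := exists_nonpos_mem_rayleighQuotients_kinkPotential (one_div_pos.mpr hε)
  rw [lambda1_eq_sInf]
  exact le_csInf ⟨R, hR⟩ fun _ => neg_le_of_mem_rayleighQuotients_kinkPotential (by positivity)

theorem lambda1_nonpos {ε : ℝ} (hε : 0 < ε) : lambda1 ε ≤ 0 := by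
  obtain ⟨R, hR, hR_nonpos⟩ :=
    exists_nonpos_mem_rayleighQuotients_kinkPotential (one_div_pos.mpr hε)
  rw [lambda1_eq_sInf]
  exact (csInf_le ⟨_, fun _ => neg_le_of_mem_rayleighQuotients_kinkPotential (by positivity)⟩
    hR).trans hR_nonpos

theorem kinkZeroMode_le_exp (z : ℝ) : kinkZeroMode z ≤ 4 * exp (-(2 * √2 * z)) := by
  have hE := exp_pos (√2 * z)
  have he := exp_pos (-(2 * √2 * z))
  have hE_le : exp (√2 * z) ≤ 2 * cosh (√2 * z) := by
    rw [cosh_eq]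
    linarith [exp_pos (-(√2 * z))]
  have hEe : exp (√2 * z) ^ 2 * exp (-(2 * √2 * z)) = 1 := by
    rw [sq, ← exp_add, ← exp_add, ← exp_zero]
    ring_nf
  rw [kinkZeroMode, div_le_iff₀ (by positivity)]
  nlinarith [mul_le_mul_of_nonneg_left (pow_le_pow_left₀ hE.le hE_le 2) he.le]

theorem tendsto_kinkZeroMode_atTop : Tendsto kinkZeroMode atTop (𝓝 0) := by
  have hexp : Tendsto (fun z => 4 * exp (-(2 * √2 * z))) atTop (𝓝 0) := by
    simpa using (tendsto_exp_neg_atTop_nhds_zero.comp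
      (tendsto_id.const_mul_atTop (by positivity : (0 : ℝ) < 2 * √2))).const_mul 4
  exact tendsto_of_tendsto_of_tendsto_of_le_of_le tendsto_const_nhds hexp
    (fun z => (kinkZeroMode_pos z).le) kinkZeroMode_le_exp

theorem tendsto_lambda1_nhdsGT_zero : Tendsto lambda1 (𝓝[>] 0) (𝓝 0) := by
  have hlower : Tendsto (fun ε => -(12 * kinkZeroMode (1 / ε))) (𝓝[>] 0) (𝓝 0) := by
    simpa using ((tendsto_kinkZeroMode_atTop.comp tendsto_inv_nhdsGT_zero).const_mul 12).neg
  exact tendsto_of_tendsto_of_tendsto_of_le_of_le' hlower tendsto_const_nhds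
    (eventually_mem_nhdsWithin.mono fun _ hε => neg_le_lambda1 hε)
    (eventually_mem_nhdsWithin.mono fun _ hε => lambda1_nonpos hε)

end

theorem stmt_18 :
    ∃ c > (0 : ℝ), ∃ C > (0 : ℝ), ∃ ε₀ > (0 : ℝ),
      (∀ ε : ℝ, 0 < ε → ε < ε₀ → lambda1 ε ≤ C * Real.exp (-c / ε)) ∧
      Tendsto lambda1 (nhdsWithin 0 (Ioi 0)) (nhds 0) := by
  refine ⟨1, one_pos, 1, one_pos, 1, one_pos, fun ε hε _ => ?_, tendsto_lambda1_nhdsGT_zero⟩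
  exact (lambda1_nonpos hε).trans (by positivity)
end
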